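/- Let Γ be a precover of the amalgam G = G₁ ∗_A G₂ and let C be an X_i-monochromatic component of Γ (i ∈ {1,2}). Then the following are equivalent: (a) for all bichromatic vertices v₁, v₂ ∈ VB(C), every path in C from v₁ to v₂ has label in A; (b) for every ϑ ∈ VB(C), VB(C) equals the A-orbit A(ϑ) = {ϑ·a : a ∈ A} and Lab(C, ϑ) is a subgroup of A. -/

import Mathlib

open Monoid

/-- A graph labelled with `X^±`: each edge carries a letter of `X` together with a
sign (`true` for a positive letter `x`, `false` for `x⁻¹`), and there is a
fixed-point-free involution `bar` reversing edges and inverting labels. -/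
structure LabeledGraph (X : Type) : Type 1 where
  V : Type
  E : Type
  bar : E → E
  ini : E → V
  lab : E → X × Bool
  bar_bar : ∀ e, bar (bar e) = e
  bar_ne : ∀ e, bar e ≠ e
  lab_bar : ∀ e, lab (bar e) = ((lab e).1, !(lab e).2)

namespace LabeledGraph

variable {X : Type} (Γ : LabeledGraph X)

/-- the terminal vertex of an edge -/
def ter (e : Γ.E) : Γ.V := Γ.ini (Γ.bar e)

/-- `Γ.IsPathFrom v w l` : the list of edges `l` forms a path from `v` to `w` in `Γ`. -/
def IsPathFrom : Γ.V → Γ.V → List Γ.E → Prop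
  | v, w, [] => v = w
  | v, w, e :: l => Γ.ini e = v ∧ IsPathFrom (Γ.ter e) w l

/-- a graph is well-labelled if edges with the same initial vertex and the same label coincide -/
def WellLabeled : Prop :=
  ∀ e₁ e₂ : Γ.E, Γ.ini e₁ = Γ.ini e₂ → Γ.lab e₁ = Γ.lab e₂ → e₁ = e₂

def Connected : Prop := ∀ v w : Γ.V, ∃ l, Γ.IsPathFrom v w l

/-- the word over `X^±` read along a list of edges -/
def word (l : List Γ.E) : List (X × Bool) := l.map Γ.lab

/-- a path (list of edges) passes through a vertex -/
def PassesThrough (l : List Γ.E) (v : Γ.V) : Prop :=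
  ∃ e ∈ l, Γ.ini e = v ∨ Γ.ter e = v

/-- the list of vertices visited by a path starting at `v` -/
def pathVertices (v : Γ.V) (l : List Γ.E) : List Γ.V := v :: l.map Γ.ter

/-- `v` is within graph distance `n` of `u` -/
def DistLe (n : ℕ) (u v : Γ.V) : Prop := ∃ l, Γ.IsPathFrom u v l ∧ l.length ≤ n

/-- a list of edges is freely reduced -/
def FreelyReduced (l : List Γ.E) : Prop := l.Chain' (fun e e' => e' ≠ Γ.bar e)

end LabeledGraph

/-- evaluation in a group `G` of a word over `X^±`, via a map `g : X → G` -/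
def wordVal {X G : Type} [Group G] (g : X → G) (w : List (X × Bool)) : G :=
  (w.map fun p => if p.2 then g p.1 else (g p.1)⁻¹).prod

namespace LabeledGraph

variable {X G : Type} [Group G] (g : X → G) (Γ : LabeledGraph X)

/-- the value in `G` of (the label of) a path -/
def pathVal (l : List Γ.E) : G := wordVal g (Γ.word l)

/-- `Lab(Γ, v₀)` : the set of values of labels of closed paths at `v₀` -/
def LabSet (v₀ : Γ.V) : Set G :=
  {x | ∃ l, Γ.IsPathFrom v₀ v₀ l ∧ Γ.pathVal g l = x}

/-- a graph is `G`-based if every path whose label is trivial in `G` is closed -/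
def IsGBased : Prop :=
  ∀ v w l, Γ.IsPathFrom v w l → Γ.pathVal g l = 1 → v = w

end LabeledGraph

/-- a morphism of labelled graphs -/
structure GraphHom {X : Type} (Γ Δ : LabeledGraph X) where
  fV : Γ.V → Δ.V
  fE : Γ.E → Δ.E
  map_ini : ∀ e, Δ.ini (fE e) = fV (Γ.ini e)
  map_bar : ∀ e, Δ.bar (fE e) = fE (Γ.bar e)
  map_lab : ∀ e, Δ.lab (fE e) = Γ.lab e

/-- the image of a morphism of labelled graphs, as a labelled graph -/
def GraphHom.image {X : Type} {Γ Δ : LabeledGraph X} (ψ : GraphHom Γ Δ) :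
    LabeledGraph X where
  V := Set.range ψ.fV
  E := Set.range ψ.fE
  bar e := ⟨Δ.bar e.1, by
    obtain ⟨a, ha⟩ := e.2
    exact ⟨Γ.bar a, by rw [← ψ.map_bar, ha]⟩⟩
  ini e := ⟨Δ.ini e.1, by
    obtain ⟨a, ha⟩ := e.2
    exact ⟨Γ.ini a, by rw [← ψ.map_ini, ha]⟩⟩
  lab e := Δ.lab e.1
  bar_bar e := Subtype.ext (Δ.bar_bar e.1)
  bar_ne e h := Δ.bar_ne e.1 (congrArg Subtype.val h)
  lab_bar e := Δ.lab_bar e.1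

/-- an isomorphism of pointed labelled graphs exists -/
def IsPointedIso {X : Type} (Γ Δ : LabeledGraph X) (v₀ : Γ.V) (w₀ : Δ.V) : Prop :=
  ∃ ψ : GraphHom Γ Δ, Function.Bijective ψ.fV ∧ Function.Bijective ψ.fE ∧ ψ.fV v₀ = w₀

/-- right multiplication by `g` on the set of right cosets of `H` -/
def cosMul {G : Type} [Group G] (H : Subgroup G) (g : G) :
    Quotient (QuotientGroup.rightRel H) → Quotient (QuotientGroup.rightRel H) :=
  Quotient.map (· * g) <| by
    intro a b hab
    have hab' := (QuotientGroup.rightRel_apply).1 hab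
    exact (QuotientGroup.rightRel_apply).2 (by simpa [mul_inv_rev, mul_assoc] using hab')

/-- the relative Cayley graph of `G` with respect to a subgroup `H`, with edges labelled
by letters from `Y` embedded into an alphabet `X` and evaluated in `G` via `val`. -/
def relCayley {G : Type} [Group G] (H : Subgroup G) {Y X : Type}
    (emb : Y → X) (val : Y → G) : LabeledGraph X where
  V := Quotient (QuotientGroup.rightRel H)
  E := Quotient (QuotientGroup.rightRel H) × (Y × Bool)
  bar e := (cosMul H (if e.2.2 then val e.2.1 else (val e.2.1)⁻¹) e.1, (e.2.1, !e.2.2))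
  ini e := e.1
  lab e := (emb e.2.1, e.2.2)
  bar_bar := by
    rintro ⟨v, y, b⟩
    induction v using Quotient.inductionOn with
    | h a => cases b <;> simp [cosMul, mul_assoc]
  bar_ne := by
    rintro ⟨v, y, b⟩ h
    have := congrArg (fun e => e.2.2) h
    simp at this
  lab_bar := by rintro ⟨v, y, b⟩; rfl
/-- `(Γ', v₀')` is obtained from `(Γ, v₀)` by a single Stallings folding: the
identification of a pair of distinct edges with the same initial vertex and the
same label. -/
def IsFoldingOf {X : Type} (Γ Γ' : LabeledGraph X) (v₀ : Γ.V) (v₀' : Γ'.V) : Prop :=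
  ∃ (π : GraphHom Γ Γ') (e₁ e₂ : Γ.E),
    e₁ ≠ e₂ ∧ Γ.ini e₁ = Γ.ini e₂ ∧ Γ.lab e₁ = Γ.lab e₂ ∧
    Function.Surjective π.fV ∧ Function.Surjective π.fE ∧
    π.fV v₀ = v₀' ∧ π.fE e₁ = π.fE e₂ ∧ π.fV (Γ.ter e₁) = π.fV (Γ.ter e₂) ∧
    (∀ a b : Γ.E, π.fE a = π.fE b →
      a = b ∨ ({a, b} : Set Γ.E) = {e₁, e₂} ∨ ({a, b} : Set Γ.E) = {Γ.bar e₁, Γ.bar e₂}) ∧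
    (∀ u v : Γ.V, π.fV u = π.fV v → u = v ∨ ({u, v} : Set Γ.V) = {Γ.ter e₁, Γ.ter e₂})

/-- `(Γ', v₀')` is obtained from `(Γ, v₀)` by cutting a single hair: the removal of an
edge (pair) whose terminal vertex has degree one. -/
def IsHairCutOf {X : Type} (Γ Γ' : LabeledGraph X) (v₀ : Γ.V) (v₀' : Γ'.V) : Prop :=
  ∃ (π : GraphHom Γ' Γ) (e : Γ.E),
    (∀ e' : Γ.E, Γ.ini e' = Γ.ter e → e' = Γ.bar e) ∧
    Function.Injective π.fV ∧ Function.Injective π.fE ∧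
    Set.range π.fV = {v | v ≠ Γ.ter e} ∧
    Set.range π.fE = {f | f ≠ e ∧ f ≠ Γ.bar e} ∧
    π.fV v₀' = v₀

/-- `(Γ', v₀')` is obtained from `(Γ, v₀)` by identifying the two distinct vertices
`v₁` and `v₂` into a single vertex (the edge sets being in natural bijection). -/
def IsEndpointIdentification {X : Type} (Γ Γ' : LabeledGraph X) (v₁ v₂ : Γ.V)
    (v₀ : Γ.V) (v₀' : Γ'.V) : Prop :=
  ∃ π : GraphHom Γ Γ', Function.Surjective π.fV ∧ Function.Bijective π.fE ∧
    π.fV v₀ = v₀' ∧ π.fV v₁ = π.fV v₂ ∧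
    ∀ u v : Γ.V, π.fV u = π.fV v → u = v ∨ ({u, v} : Set Γ.V) = {v₁, v₂}
namespace Amalgam

variable {X : Fin 2 → Type} {Gi : Fin 2 → Type} [∀ i, Group (Gi i)]
  {A : Type} [Group A] (φ : ∀ i, A →* Gi i) (gen : ∀ i, X i → Gi i)

/-- the combined alphabet `X = X₁ ⊔ X₂` (disjoint by construction) -/
abbrev Alpha (X : Fin 2 → Type) : Type := (i : Fin 2) × X i

/-- evaluation of the letters in the amalgam `G = G₁ ∗_A G₂` -/
def genG : Alpha X → PushoutI φ := fun a => PushoutI.of (φ := φ) a.1 (gen a.1 a.2)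

/-- the image of the amalgamated subgroup `A` in `G` -/
def Asub : Subgroup (PushoutI φ) := (PushoutI.base φ).range

variable (Γ : LabeledGraph (Alpha X))

/-- the color (`1` or `2`) of an edge -/
def colorE (e : Γ.E) : Fin 2 := (Γ.lab e).1.1

/-- one step between vertices along an edge of color `i` -/
def MonoStep (i : Fin 2) (u v : Γ.V) : Prop :=
  ∃ e : Γ.E, colorE Γ e = i ∧ Γ.ini e = u ∧ Γ.ter e = v

/-- reachability by paths of color `i` -/
def monoReach (i : Fin 2) : Γ.V → Γ.V → Prop := Relation.ReflTransGen (MonoStep Γ i)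

/-- the monochromatic component of an edge: all edges of the same color whose initial
vertex is monochromatically reachable from that of `e₀` -/
def monoComponent (e₀ : Γ.E) : Set Γ.E :=
  {e | colorE Γ e = colorE Γ e₀ ∧ monoReach Γ (colorE Γ e₀) (Γ.ini e₀) (Γ.ini e)}

/-- `C` is an `X_i`-monochromatic component of `Γ` -/
def IsMonoComponent (i : Fin 2) (C : Set Γ.E) : Prop :=
  ∃ e₀, colorE Γ e₀ = i ∧ C = monoComponent Γ e₀

/-- the vertex set of a set of edges -/
def VSet (C : Set Γ.E) : Set Γ.V := {v | ∃ e ∈ C, Γ.ini e = v}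

/-- a vertex is bichromatic if edges of both colors begin at it -/
def Bichromatic (v : Γ.V) : Prop :=
  (∃ e, Γ.ini e = v ∧ colorE Γ e = 0) ∧ (∃ e, Γ.ini e = v ∧ colorE Γ e = 1)

/-- the bichromatic vertices of a component -/
def VB (C : Set Γ.E) : Set Γ.V := {v ∈ VSet Γ C | Bichromatic Γ v}

/-- `Lab(C, u)` : values of labels of closed paths at `u` inside the edge set `C` -/
def LabSetIn (C : Set Γ.E) (u : Γ.V) : Set (PushoutI φ) :=
  {x | ∃ l, (∀ e ∈ l, e ∈ C) ∧ Γ.IsPathFrom u u l ∧ Γ.pathVal (genG φ gen) l = x}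

/-- the `A`-orbit of a vertex `ϑ` inside a monochromatic component `C` -/
def AOrbit (C : Set Γ.E) (ϑ : Γ.V) : Set Γ.V :=
  {v | ∃ l, (∀ e ∈ l, e ∈ C) ∧ Γ.IsPathFrom ϑ v l ∧ Γ.pathVal (genG φ gen) l ∈ Asub φ}

/-- `Γ` is `X_i^±`-saturated at `v` -/
def SaturatedAt (i : Fin 2) (v : Γ.V) : Prop :=
  ∀ (x : X i) (b : Bool), ∃ e : Γ.E, Γ.ini e = v ∧ Γ.lab e = (⟨i, x⟩, b)

/-- a (connected) precover of `G = G₁ ∗_A G₂` : a well-labelled `G`-based graph all of whose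
monochromatic components are covers of the corresponding free factor -/
def IsPrecover : Prop :=
  Γ.WellLabeled ∧ Γ.Connected ∧ Γ.IsGBased (genG φ gen) ∧
    ∀ i C, IsMonoComponent Γ i C → ∀ v ∈ VSet Γ C, SaturatedAt Γ i v

/-- a redundant monochromatic component of a pointed precover -/
def Redundant (v₀ : Γ.V) (i : Fin 2) (C : Set Γ.E) : Prop :=
  IsMonoComponent Γ i C ∧
    (((∀ j D, IsMonoComponent Γ j D → D = C) ∧ LabSetIn φ gen Γ C v₀ = {1}) ∨
      ((∃ j D, IsMonoComponent Γ j D ∧ D ≠ C) ∧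
        (∀ ϑ ∈ VB Γ C, LabSetIn φ gen Γ C ϑ ⊆ (Asub φ : Set (PushoutI φ)) ∧
          VB Γ C = AOrbit φ gen Γ C ϑ) ∧
        (v₀ ∉ VSet Γ C ∨ (v₀ ∈ VB Γ C ∧ LabSetIn φ gen Γ C v₀ = {1}))))

/-- a reduced precover -/
def IsReducedPrecover (v₀ : Γ.V) : Prop :=
  IsPrecover φ gen Γ ∧ (∀ i C, ¬ Redundant φ gen Γ v₀ i C) ∧
    ∀ i C, IsMonoComponent Γ i C → v₀ ∈ VSet Γ C →
      LabSetIn φ gen Γ C v₀ ∩ (Asub φ : Set (PushoutI φ)) ≠ {1} →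
      ∃ j D, j ≠ i ∧ IsMonoComponent Γ j D ∧ v₀ ∈ VSet Γ D ∧
        LabSetIn φ gen Γ D v₀ ∩ (Asub φ : Set (PushoutI φ)) =
          LabSetIn φ gen Γ C v₀ ∩ (Asub φ : Set (PushoutI φ))

/-- a decomposition into monochromatic blocks witnessing a word in normal form:
each block is nonempty and monochromatic, consecutive blocks have different colors,
each syllable is nontrivial, and if there is more than one syllable then no syllable
lies in (the image of) `A` -/
def NormalParts (parts : List (Fin 2 × List (Alpha X × Bool))) : Prop :=
  parts ≠ [] ∧
    (∀ p ∈ parts, p.2 ≠ [] ∧ ∀ a ∈ p.2, a.1.1 = p.1) ∧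
    parts.Chain' (fun p q => p.1 ≠ q.1) ∧
    (∀ p ∈ parts, wordVal (genG φ gen) p.2 ≠ 1) ∧
    (parts.length ≠ 1 → ∀ p ∈ parts, wordVal (genG φ gen) p.2 ∉ Asub φ)

/-- a word over `X^±` is in normal form -/
def IsNormalWord (w : List (Alpha X × Bool)) : Prop :=
  ∃ parts, NormalParts φ gen parts ∧ w = (parts.map Prod.snd).flatten

/-- a normal path from `v` to `w` : a path whose label is a word in normal form -/
def IsNormalPathFrom (v w : Γ.V) (l : List Γ.E) : Prop :=
  Γ.IsPathFrom v w l ∧ IsNormalWord φ gen (Γ.word l)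

/-- the relative Cayley graph `Cayley(G, H)` of the amalgam -/
def cayleyGraph (H : Subgroup (PushoutI φ)) : LabeledGraph (Alpha X) :=
  relCayley H (id : Alpha X → Alpha X) (genG φ gen)

/-- the basepoint `H · 1` of `Cayley(G, H)` -/
def cayleyBase (H : Subgroup (PushoutI φ)) : (cayleyGraph φ gen H).V :=
  Quotient.mk (QuotientGroup.rightRel H) 1

/-- an essential vertex of `Cayley(G, H)` : one through which a normal path closed at the
basepoint passes -/
def Essential (H : Subgroup (PushoutI φ)) (v : (cayleyGraph φ gen H).V) : Prop :=
  ∃ l, IsNormalPathFrom φ gen (cayleyGraph φ gen H) (cayleyBase φ gen H) (cayleyBase φ gen H) l ∧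
    (cayleyGraph φ gen H).PassesThrough l v

/-- the vertices of the normal core: the basepoint together with the essential vertices -/
def CoreV (H : Subgroup (PushoutI φ)) (v : (cayleyGraph φ gen H).V) : Prop :=
  v = cayleyBase φ gen H ∨ Essential φ gen H v

/-- the normal core of `Cayley(G, H)` : the restriction of `Cayley(G, H)` to the
essential vertices -/
def normalCore (H : Subgroup (PushoutI φ)) : LabeledGraph (Alpha X) where
  V := {v : (cayleyGraph φ gen H).V // CoreV φ gen H v}
  E := {e : (cayleyGraph φ gen H).E //
        CoreV φ gen H ((cayleyGraph φ gen H).ini e) ∧ CoreV φ gen H ((cayleyGraph φ gen H).ter e)}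
  bar e := ⟨(cayleyGraph φ gen H).bar e.1, by
    refine ⟨e.2.2, ?_⟩
    have : (cayleyGraph φ gen H).ter ((cayleyGraph φ gen H).bar e.1) = (cayleyGraph φ gen H).ini e.1 := by
      rw [LabeledGraph.ter, (cayleyGraph φ gen H).bar_bar]
    rw [this]
    exact e.2.1⟩
  ini e := ⟨(cayleyGraph φ gen H).ini e.1, e.2.1⟩
  lab e := (cayleyGraph φ gen H).lab e.1
  bar_bar e := Subtype.ext ((cayleyGraph φ gen H).bar_bar e.1)
  bar_ne e h := (cayleyGraph φ gen H).bar_ne e.1 (congrArg Subtype.val h)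
  lab_bar e := (cayleyGraph φ gen H).lab_bar e.1

/-- the basepoint of the normal core -/
def coreBase (H : Subgroup (PushoutI φ)) : (normalCore φ gen H).V :=
  ⟨cayleyBase φ gen H, Or.inl rfl⟩

/-- the relative Cayley graph of a free factor `G_j` with respect to a subgroup `L ≤ G_j`,
viewed as a graph labelled with `X^±` (using only letters of color `j`) -/
def cayleyFactor (j : Fin 2) (L : Subgroup (Gi j)) : LabeledGraph (Alpha X) :=
  relCayley L (fun x : X j => (⟨j, x⟩ : Alpha X)) (gen j)

/-- the diameter of the factor group `G_i` : the length of a longest geodesic in its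
Cayley graph, i.e. the least `n` such that every element is a product of at most `n`
generators and inverses -/
noncomputable def groupDiam (i : Fin 2) : ℕ :=
  sInf {n | ∀ h : Gi i, ∃ w : List (X i × Bool), wordVal (gen i) w = h ∧ w.length ≤ n}

end Amalgam

/-! ### Auxiliary lemmas for Statement 12 -/

section Stmt12Aux

namespace LabeledGraph

variable {X : Type} {Γ : LabeledGraph X}

theorem ter_bar' (e : Γ.E) : Γ.ter (Γ.bar e) = Γ.ini e := by
  simp [ter, Γ.bar_bar]

theorem isPathFrom_append' {v w u : Γ.V} {l₁ l₂ : List Γ.E}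
    (h₁ : Γ.IsPathFrom v w l₁) (h₂ : Γ.IsPathFrom w u l₂) :
    Γ.IsPathFrom v u (l₁ ++ l₂) := by
  induction l₁ generalizing v with
  | nil =>
    have hvw : v = w := h₁
    subst hvw; exact h₂
  | cons e l ih => exact ⟨h₁.1, ih h₁.2⟩

theorem isPathFrom_revbar {v w : Γ.V} {l : List Γ.E} (h : Γ.IsPathFrom v w l) :
    Γ.IsPathFrom w v (l.reverse.map Γ.bar) := by
  induction l generalizing v with
  | nil =>
    have hvw : v = w := h
    subst hvw; exact rfl
  | cons e l ih =>
    rw [List.reverse_cons, List.map_append]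
    refine isPathFrom_append' (ih h.2) ⟨rfl, ?_⟩
    show Γ.ter (Γ.bar e) = v
    rw [ter_bar']; exact h.1

end LabeledGraph

theorem wordVal_append' {X G : Type} [Group G] (g : X → G) (w₁ w₂ : List (X × Bool)) :
    wordVal g (w₁ ++ w₂) = wordVal g w₁ * wordVal g w₂ := by
  simp [wordVal]

theorem wordVal_cons' {X G : Type} [Group G] (g : X → G) (p : X × Bool) (w : List (X × Bool)) :
    wordVal g (p :: w) = (if p.2 then g p.1 else (g p.1)⁻¹) * wordVal g w := by
  simp [wordVal]

theorem wordVal_revneg {X G : Type} [Group G] (g : X → G) (w : List (X × Bool)) :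
    wordVal g (w.reverse.map fun p => (p.1, !p.2)) = (wordVal g w)⁻¹ := by
  induction w with
  | nil => simp [wordVal]
  | cons p w ih =>
    rw [List.reverse_cons, List.map_append, wordVal_append', ih, wordVal_cons']
    obtain ⟨x, b⟩ := p
    cases b <;> simp [wordVal]

namespace LabeledGraph

variable {X G : Type} [Group G]

theorem pathVal_append' (g : X → G) (Γ : LabeledGraph X) (l₁ l₂ : List Γ.E) :
    Γ.pathVal g (l₁ ++ l₂) = Γ.pathVal g l₁ * Γ.pathVal g l₂ := by
  simp [pathVal, word, wordVal]

theorem pathVal_revbar (g : X → G) (Γ : LabeledGraph X) (l : List Γ.E) :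
    Γ.pathVal g (l.reverse.map Γ.bar) = (Γ.pathVal g l)⁻¹ := by
  induction l with
  | nil => simp [pathVal, word, wordVal]
  | cons e l ih =>
    rw [List.reverse_cons, List.map_append, pathVal_append', ih]
    have h1 : Γ.pathVal g [Γ.bar e] = (Γ.pathVal g [e])⁻¹ := by
      simp only [pathVal, word, List.map, wordVal, Γ.lab_bar]
      cases h : (Γ.lab e).2 <;> simp
    have h2 : Γ.pathVal g (e :: l) = Γ.pathVal g [e] * Γ.pathVal g l := by
      rw [show (e :: l) = [e] ++ l from rfl, pathVal_append']
    simp only [List.map_cons, List.map_nil]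
    rw [h1, h2, mul_inv_rev]

end LabeledGraph

namespace Amalgam

variable {X : Fin 2 → Type} {Gi : Fin 2 → Type} [∀ i, Group (Gi i)]
  {A : Type} [Group A] {φ : ∀ i, A →* Gi i} {gen : ∀ i, X i → Gi i}
  {Γ : LabeledGraph (Alpha X)}

theorem colorE_bar (e : Γ.E) : colorE Γ (Γ.bar e) = colorE Γ e := by
  simp [colorE, Γ.lab_bar]

theorem bar_mem_monoComponent {e₀ e : Γ.E} (h : e ∈ monoComponent Γ e₀) :
    Γ.bar e ∈ monoComponent Γ e₀ := by
  refine ⟨(colorE_bar e).trans h.1, ?_⟩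
  exact h.2.tail ⟨e, h.1, rfl, rfl⟩

theorem ter_mem_VSet {e₀ e : Γ.E} (h : e ∈ monoComponent Γ e₀) :
    Γ.ter e ∈ VSet Γ (monoComponent Γ e₀) :=
  ⟨Γ.bar e, bar_mem_monoComponent h, rfl⟩

theorem endpoint_mem_VSet {e₀ : Γ.E} {v w : Γ.V} {l : List Γ.E}
    (hl : ∀ e ∈ l, e ∈ monoComponent Γ e₀) (hp : Γ.IsPathFrom v w l)
    (hv : v ∈ VSet Γ (monoComponent Γ e₀)) : w ∈ VSet Γ (monoComponent Γ e₀) := by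
  induction l generalizing v with
  | nil =>
    have hvw : v = w := hp
    subst hvw; exact hv
  | cons e l ih =>
    exact ih (fun f hf => hl f (List.mem_cons_of_mem _ hf)) hp.2
      (ter_mem_VSet (hl e List.mem_cons_self))

theorem reach_path {e₀ : Γ.E} {u : Γ.V}
    (h : monoReach Γ (colorE Γ e₀) (Γ.ini e₀) u) :
    ∃ l, (∀ e ∈ l, e ∈ monoComponent Γ e₀) ∧ Γ.IsPathFrom (Γ.ini e₀) u l := by
  induction h with
  | refl => exact ⟨[], by simp, rfl⟩
  | @tail b c hab step ih =>
    obtain ⟨l, hl, hp⟩ := ih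
    obtain ⟨e, hc, hi, ht⟩ := step
    refine ⟨l ++ [e], ?_, LabeledGraph.isPathFrom_append' hp ⟨hi, ht⟩⟩
    intro f hf
    rcases List.mem_append.1 hf with h' | h'
    · exact hl f h'
    · rw [List.mem_singleton] at h'
      subst h'
      exact ⟨hc, hi ▸ hab⟩

theorem vset_path {e₀ : Γ.E} {v : Γ.V} (hv : v ∈ VSet Γ (monoComponent Γ e₀)) :
    ∃ l, (∀ e ∈ l, e ∈ monoComponent Γ e₀) ∧ Γ.IsPathFrom (Γ.ini e₀) v l := by
  obtain ⟨e, he, hi⟩ := hv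
  subst hi
  exact reach_path he.2

theorem vset_connect {e₀ : Γ.E} {v w : Γ.V} (hv : v ∈ VSet Γ (monoComponent Γ e₀))
    (hw : w ∈ VSet Γ (monoComponent Γ e₀)) :
    ∃ l, (∀ e ∈ l, e ∈ monoComponent Γ e₀) ∧ Γ.IsPathFrom v w l := by
  obtain ⟨l₁, h1, p1⟩ := vset_path hv
  obtain ⟨l₂, h2, p2⟩ := vset_path hw
  refine ⟨l₁.reverse.map Γ.bar ++ l₂, ?_,
    LabeledGraph.isPathFrom_append' (LabeledGraph.isPathFrom_revbar p1) p2⟩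
  intro f hf
  rcases List.mem_append.1 hf with h' | h'
  · obtain ⟨f', hf', rfl⟩ := List.mem_map.1 h'
    exact bar_mem_monoComponent (h1 f' (List.mem_reverse.1 hf'))
  · exact h2 f h'

theorem read_word {e₀ : Γ.E}
    (hsat : ∀ v ∈ VSet Γ (monoComponent Γ e₀), SaturatedAt Γ (colorE Γ e₀) v)
    (w : List (X (colorE Γ e₀) × Bool)) {v : Γ.V}
    (hv : v ∈ VSet Γ (monoComponent Γ e₀)) :
    ∃ l u, Γ.IsPathFrom v u l ∧ u ∈ VSet Γ (monoComponent Γ e₀) ∧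
      Γ.word l = w.map (fun p => ((⟨colorE Γ e₀, p.1⟩ : Alpha X), p.2)) := by
  induction w generalizing v with
  | nil => exact ⟨[], v, rfl, hv, rfl⟩
  | cons p w ih =>
    obtain ⟨e, hi, hl⟩ := hsat v hv p.1 p.2
    have heC : e ∈ monoComponent Γ e₀ := by
      obtain ⟨f, hf, hfi⟩ := hv
      refine ⟨by simp [colorE, hl], ?_⟩
      rw [hi, ← hfi]
      exact hf.2
    obtain ⟨l, u, hp, hu, hw⟩ := ih (ter_mem_VSet heC)
    exact ⟨e :: l, u, ⟨hi, hp⟩, hu, by simp [LabeledGraph.word, hl] at hw ⊢; exact hw⟩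

theorem wordVal_embed (φ : ∀ i, A →* Gi i) (gen : ∀ i, X i → Gi i) (j : Fin 2)
    (w : List (X j × Bool)) :
    wordVal (genG φ gen) (w.map fun p => ((⟨j, p.1⟩ : Alpha X), p.2)) =
      PushoutI.of (φ := φ) j (wordVal (gen j) w) := by
  induction w with
  | nil => simp [wordVal]
  | cons p w ih =>
    rw [List.map_cons, wordVal_cons', wordVal_cons', map_mul, ih]
    congr 1
    cases hb : p.2 <;> simp [genG]

theorem exists_word {j : Fin 2} (hgen : Subgroup.closure (Set.range (gen j)) = ⊤)
    (h : Gi j) : ∃ w : List (X j × Bool), wordVal (gen j) w = h := by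
  have hmem : h ∈ Subgroup.closure (Set.range (gen j)) := hgen ▸ Subgroup.mem_top h
  induction hmem using Subgroup.closure_induction with
  | mem x hx =>
    obtain ⟨a, rfl⟩ := hx
    exact ⟨[(a, true)], by simp [wordVal]⟩
  | one => exact ⟨[], by simp [wordVal]⟩
  | mul x y hx hy ihx ihy =>
    obtain ⟨w₁, rfl⟩ := ihx
    obtain ⟨w₂, rfl⟩ := ihy
    exact ⟨w₁ ++ w₂, wordVal_append' _ _ _⟩
  | inv x hx ihx =>
    obtain ⟨w, rfl⟩ := ihx
    exact ⟨w.reverse.map fun p => (p.1, !p.2), wordVal_revneg _ _⟩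

end Amalgam

end Stmt12Aux

open Amalgam in
/-- For an `X_i`-monochromatic component `C` of a precover `Γ` of the
amalgam `G = G₁ ∗_A G₂`, every path in `C` between bichromatic vertices has label in `A`
if and only if the bichromatic vertices of `C` form a single `A`-orbit and `Lab(C, ϑ)`
is contained in `A` for every bichromatic vertex `ϑ`. -/
theorem stmt_12
    {X : Fin 2 → Type} {Gi : Fin 2 → Type} [∀ i, Group (Gi i)] [∀ i, Finite (X i)]
    {A : Type} [Group A] (φ : ∀ i, A →* Gi i) (gen : ∀ i, X i → Gi i)
    (hφ : ∀ i, Function.Injective (φ i))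
    (hgen : ∀ i, Subgroup.closure (Set.range (gen i)) = ⊤)
    (Γ : LabeledGraph (Alpha X)) (hpre : IsPrecover φ gen Γ)
    (i : Fin 2) (C : Set Γ.E) (hC : IsMonoComponent Γ i C) :
    (∀ v₁ ∈ VB Γ C, ∀ v₂ ∈ VB Γ C, ∀ l, (∀ e ∈ l, e ∈ C) → Γ.IsPathFrom v₁ v₂ l →
        Γ.pathVal (genG φ gen) l ∈ Asub φ) ↔
      (∀ ϑ ∈ VB Γ C, VB Γ C = AOrbit φ gen Γ C ϑ ∧
        LabSetIn φ gen Γ C ϑ ⊆ (Asub φ : Set (PushoutI φ))) := by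
  obtain ⟨wl, conn, based, sat⟩ := hpre
  obtain ⟨e₀, hce₀, rfl⟩ := hC
  constructor
  · -- (a) → (b)
    intro h ϑ hϑ
    constructor
    · -- VB = AOrbit
      ext v
      constructor
      · intro hv
        obtain ⟨l, hl, hp⟩ := vset_connect hϑ.1 hv.1
        exact ⟨l, hl, hp, h ϑ hϑ v hv l hl hp⟩
      · rintro ⟨l, hl, hp, hval⟩
        have hvVS : v ∈ VSet Γ (monoComponent Γ e₀) := endpoint_mem_VSet hl hp hϑ.1
        refine ⟨hvVS, ?_⟩
        -- v is bichromatic: for each color c, transport the color-c edge from ϑ to v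
        have key : ∀ c : Fin 2, (∃ e, Γ.ini e = ϑ ∧ colorE Γ e = c) →
            ∃ e, Γ.ini e = v ∧ colorE Γ e = c := by
          rintro c ⟨ec, hecini, heccol⟩
          set D := monoComponent Γ ec with hD
          have hϑD : ϑ ∈ VSet Γ D := ⟨ec, ⟨rfl, Relation.ReflTransGen.refl⟩, hecini⟩
          have hDmono : IsMonoComponent Γ (colorE Γ ec) D := ⟨ec, rfl, rfl⟩
          have hsat : ∀ u ∈ VSet Γ D, SaturatedAt Γ (colorE Γ ec) u :=
            fun u hu => sat (colorE Γ ec) D hDmono u hu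
          -- express the path value as base φ a and read a word for φ _ a from ϑ
          rw [Asub, MonoidHom.mem_range] at hval
          obtain ⟨a, ha⟩ := hval
          obtain ⟨w, hw⟩ := exists_word (hgen (colorE Γ ec)) (φ (colorE Γ ec) a)
          obtain ⟨m, u, hmp, huD, hmw⟩ := read_word hsat w hϑD
          have hmval : Γ.pathVal (genG φ gen) m = Γ.pathVal (genG φ gen) l := by
            rw [LabeledGraph.pathVal, hmw, wordVal_embed, hw,
              PushoutI.of_apply_eq_base φ, ha]
          -- the path (reverse of l) ++ m goes from v to u with trivial value
          have hvu : v = u := by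
            refine based v u (l.reverse.map Γ.bar ++ m)
              (LabeledGraph.isPathFrom_append' (LabeledGraph.isPathFrom_revbar hp) hmp) ?_
            rw [LabeledGraph.pathVal_append', LabeledGraph.pathVal_revbar, hmval,
              inv_mul_cancel]
          obtain ⟨f, hfD, hfini⟩ := huD
          exact ⟨f, hvu ▸ hfini, hfD.1.trans heccol⟩
        exact ⟨key 0 hϑ.2.1, key 1 hϑ.2.2⟩
    · -- LabSetIn ⊆ Asub
      rintro x ⟨l, hl, hp, hval⟩
      exact hval ▸ (h ϑ hϑ ϑ hϑ l hl hp)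
  · -- (b) → (a)
    intro hb v₁ h₁ v₂ h₂ l hl hp
    obtain ⟨horb, hlab⟩ := hb v₁ h₁
    have h₂' : v₂ ∈ AOrbit φ gen Γ (monoComponent Γ e₀) v₁ := horb ▸ h₂
    obtain ⟨m, hm, pm, pval⟩ := h₂'
    have hclosed : Γ.IsPathFrom v₁ v₁ (l ++ m.reverse.map Γ.bar) :=
      LabeledGraph.isPathFrom_append' hp (LabeledGraph.isPathFrom_revbar pm)
    have hmemC : ∀ e ∈ l ++ m.reverse.map Γ.bar, e ∈ monoComponent Γ e₀ := by
      intro f hf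
      rcases List.mem_append.1 hf with h' | h'
      · exact hl f h'
      · obtain ⟨f', hf', rfl⟩ := List.mem_map.1 h'
        exact bar_mem_monoComponent (hm f' (List.mem_reverse.1 hf'))
    have hin : Γ.pathVal (genG φ gen) l * (Γ.pathVal (genG φ gen) m)⁻¹ ∈ Asub φ := by
      have := hlab ⟨l ++ m.reverse.map Γ.bar, hmemC, hclosed, by
        rw [LabeledGraph.pathVal_append', LabeledGraph.pathVal_revbar]⟩
      exact this
    have := mul_mem hin pval
    rwa [inv_mul_cancel_right] at this
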